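/- Smallness of bubble interaction in the critical Lebesgue norm: Let D ≥ 3 and W the Aubin–Talenti function, f(u) = |u|^{4/(D-2)}u. There is a constant C = C(D, N) such that for scales 0 < λ₁ ≤ ⋯ ≤ λ_N and phases θ₁,…,θ_N, the interaction term f_i := f(Σ_j e^{iθ_j}W_{λ_j}) − Σ_j e^{iθ_j} f(W_{λ_j}) satisfies |⟨f_i | 𝒵_{λ_j}⟩| ≤ C( (λ_j/λ_{j+1})^{(D-2)/2} + (λ_{j-1}/λ_j)^{(D-2)/2} ) for any fixed 𝒵 ∈ C_c^∞((0,∞)), where 𝒵_λ(r) = λ^{-(D-2)/2}𝒵(r/λ) and ⟨f|g⟩ = Re∫₀^∞ f̄ g r^{D-1}dr (conventions λ₀/λ₁ := 0 and λ_N/λ_{N+1} := 0). -/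

import Mathlib

set_option maxHeartbeats 1000000

open Real MeasureTheory Set Complex

noncomputable section

/-- The critical nonlinearity `f(u) = |u|^{4/(D-2)} u` on `ℂ`. -/
def fNL (D : ℕ) (u : ℂ) : ℂ := ((‖u‖ ^ ((4 : ℝ) / ((D : ℝ) - 2)) : ℝ) : ℂ) * u

/-- The Aubin–Talenti profile `W(r) = (1 + r²/(D(D-2)))^{-(D-2)/2}`. -/
def W (D : ℕ) (r : ℝ) : ℝ :=
  (1 + r ^ 2 / ((D : ℝ) * ((D : ℝ) - 2))) ^ (-(((D : ℝ) - 2) / 2))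

/-- The `Ḣ¹`-invariant rescaling of a radial function. -/
def resc (D : ℕ) (g : ℝ → ℝ) (lam r : ℝ) : ℝ := lam ^ (-(((D : ℝ) - 2) / 2)) * g (r / lam)

section aux

lemma aux_pow_diff {q X Y : ℝ} (hq : 0 < q) (hY : 0 ≤ Y) (hXY : Y ≤ X) :
    (X ^ q - Y ^ q) * Y ≤ max 1 q * (X ^ q * (X - Y)) := by
  have hX : 0 ≤ X := hY.trans hXY
  have hXq : 0 ≤ X ^ q := Real.rpow_nonneg hX q
  have hmax : (1:ℝ) ≤ max 1 q := le_max_left 1 q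
  have hsub : 0 ≤ X - Y := sub_nonneg.mpr hXY
  rcases eq_or_lt_of_le hY with h0 | hYpos
  · rw [← h0, mul_zero, sub_zero]
    exact mul_nonneg (by positivity) (mul_nonneg hXq hX)
  have hXpos : 0 < X := lt_of_lt_of_le hYpos hXY
  have hle : Y ^ q ≤ X ^ q := Real.rpow_le_rpow hY hXY hq.le
  have hYq : 0 ≤ Y ^ q := Real.rpow_nonneg hY q
  rcases le_total q 1 with hq1 | hq1
  · have ht : (1:ℝ) ≤ X / Y := (one_le_div hYpos).mpr hXY
    have h1 : (X / Y) ^ q ≤ (X / Y) ^ (1:ℝ) :=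
      Real.rpow_le_rpow_of_exponent_le ht hq1
    rw [Real.rpow_one] at h1
    have h2 : X ^ q = Y ^ q * (X / Y) ^ q := by
      rw [← Real.mul_rpow hY (by positivity), mul_div_cancel₀ _ (ne_of_gt hYpos)]
    have key : X ^ q * Y ≤ Y ^ q * X := by
      have := mul_le_mul_of_nonneg_left h1 hYq
      rw [← h2] at this
      calc X ^ q * Y ≤ Y ^ q * (X / Y) * Y := by nlinarith
        _ = Y ^ q * X := by field_simp
    nlinarith [mul_nonneg (sub_nonneg.mpr hle) hsub,
      mul_nonneg (sub_nonneg.mpr hmax) (mul_nonneg hXq hsub)]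
  · have hs : (-1:ℝ) ≤ Y / X - 1 := by
      have : 0 ≤ Y / X := by positivity
      linarith
    have hB := one_add_mul_self_le_rpow_one_add hs hq1
    rw [add_sub_cancel] at hB
    rw [Real.div_rpow hY hX q] at hB
    have hXqpos : 0 < X ^ q := Real.rpow_pos_of_pos hXpos q
    have hB2 : (1 + q * (Y / X - 1)) * X ^ q ≤ Y ^ q := (le_div_iff₀ hXqpos).mp hB
    have hmq : max 1 q = q := max_eq_right hq1
    rw [hmq]
    have hfrac : (1 - Y / X) * Y ≤ X - Y := by
      have h5 : (2 * Y - X) * X ≤ Y * Y := by nlinarith [sq_nonneg (X - Y)]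
      have h6 : 2 * Y - X ≤ Y * Y / X := (le_div_iff₀ hXpos).mpr h5
      rw [sub_mul, one_mul, div_mul_eq_mul_div]
      linarith
    have e1 : X ^ q - Y ^ q ≤ q * ((1 - Y / X) * X ^ q) := by nlinarith [hB2]
    have e2 : (X ^ q - Y ^ q) * Y ≤ q * ((1 - Y / X) * X ^ q) * Y :=
      mul_le_mul_of_nonneg_right e1 hY
    have e4 : q * X ^ q * ((1 - Y / X) * Y) ≤ q * X ^ q * (X - Y) :=
      mul_le_mul_of_nonneg_left hfrac (by positivity)
    calc (X ^ q - Y ^ q) * Y ≤ q * ((1 - Y / X) * X ^ q) * Y := e2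
      _ = q * X ^ q * ((1 - Y / X) * Y) := by ring
      _ ≤ q * X ^ q * (X - Y) := e4
      _ = q * (X ^ q * (X - Y)) := by ring

lemma fNL_norm (D : ℕ) (x : ℂ) :
    ‖fNL D x‖ = ‖x‖ ^ ((4 : ℝ) / ((D : ℝ) - 2)) * ‖x‖ := by
  unfold fNL
  rw [norm_mul, Complex.norm_real, Real.norm_eq_abs,
    _root_.abs_of_nonneg (Real.rpow_nonneg (norm_nonneg x) _)]

lemma fNL_phase (D : ℕ) (θ : ℝ) (z : ℂ) :
    fNL D (Complex.exp (θ * Complex.I) * z) = Complex.exp (θ * Complex.I) * fNL D z := by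
  unfold fNL
  rw [norm_mul, Complex.norm_exp_ofReal_mul_I, one_mul]
  ring

lemma fNL_lip_aux (D : ℕ) (hD : 3 ≤ D) {x y : ℂ} (hxy : ‖y‖ ≤ ‖x‖) :
    ‖fNL D x - fNL D y‖ ≤ 5 * ‖x‖ ^ ((4 : ℝ) / ((D : ℝ) - 2)) * ‖x - y‖ := by
  set q : ℝ := (4 : ℝ) / ((D : ℝ) - 2) with hq
  have hD2 : (1:ℝ) ≤ (D : ℝ) - 2 := by
    have : (3:ℝ) ≤ (D:ℝ) := by exact_mod_cast hD
    linarith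
  have hqpos : 0 < q := by positivity
  have hq4 : q ≤ 4 := by
    rw [hq, div_le_iff₀ (by linarith)]
    nlinarith
  have hXq : 0 ≤ ‖x‖ ^ q := Real.rpow_nonneg (norm_nonneg x) q
  have hsplit : fNL D x - fNL D y
      = ((‖x‖ ^ q : ℝ) : ℂ) * (x - y) + (((‖x‖ ^ q - ‖y‖ ^ q : ℝ)) : ℂ) * y := by
    unfold fNL
    push_cast
    ring
  have h1 : ‖((‖x‖ ^ q : ℝ) : ℂ) * (x - y)‖ = ‖x‖ ^ q * ‖x - y‖ := by
    rw [norm_mul, Complex.norm_real, Real.norm_eq_abs,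
      _root_.abs_of_nonneg hXq]
  have h2 : ‖(((‖x‖ ^ q - ‖y‖ ^ q : ℝ)) : ℂ) * y‖ ≤ max 1 q * (‖x‖ ^ q * ‖x - y‖) := by
    rw [norm_mul, Complex.norm_real, Real.norm_eq_abs]
    have hd := aux_pow_diff hqpos (norm_nonneg y) hxy
    have habs : |‖x‖ ^ q - ‖y‖ ^ q| = ‖x‖ ^ q - ‖y‖ ^ q :=
      _root_.abs_of_nonneg (sub_nonneg.mpr (Real.rpow_le_rpow (norm_nonneg y) hxy hqpos.le))
    rw [habs]
    calc (‖x‖ ^ q - ‖y‖ ^ q) * ‖y‖ ≤ max 1 q * (‖x‖ ^ q * (‖x‖ - ‖y‖)) := hd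
      _ ≤ max 1 q * (‖x‖ ^ q * ‖x - y‖) := by
          have := norm_sub_norm_le x y
          have hm : (0:ℝ) ≤ max 1 q := le_trans zero_le_one (le_max_left 1 q)
          exact mul_le_mul_of_nonneg_left (mul_le_mul_of_nonneg_left this hXq) hm
  have hmle : max 1 q ≤ 4 := max_le (by norm_num) hq4
  calc ‖fNL D x - fNL D y‖
      ≤ ‖((‖x‖ ^ q : ℝ) : ℂ) * (x - y)‖ + ‖(((‖x‖ ^ q - ‖y‖ ^ q : ℝ)) : ℂ) * y‖ := by
        rw [hsplit]; exact norm_add_le _ _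
    _ ≤ ‖x‖ ^ q * ‖x - y‖ + max 1 q * (‖x‖ ^ q * ‖x - y‖) := by rw [h1]; linarith [h2]
    _ ≤ 5 * ‖x‖ ^ q * ‖x - y‖ := by nlinarith [mul_nonneg hXq (norm_nonneg (x - y))]

lemma fNL_lip (D : ℕ) (hD : 3 ≤ D) (x y : ℂ) :
    ‖fNL D x - fNL D y‖ ≤ 5 * max ‖x‖ ‖y‖ ^ ((4 : ℝ) / ((D : ℝ) - 2)) * ‖x - y‖ := by
  rcases le_total ‖y‖ ‖x‖ with h | h
  · rw [max_eq_left h]; exact fNL_lip_aux D hD h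
  · rw [max_eq_right h, ← norm_neg (fNL D x - fNL D y), neg_sub, ← norm_neg (x - y), neg_sub]
    exact fNL_lip_aux D hD h

variable {D : ℕ}

lemma hDr (hD : 3 ≤ D) : (1:ℝ) ≤ (D:ℝ) - 2 := by
  have : (3:ℝ) ≤ (D:ℝ) := by exact_mod_cast hD
  linarith

lemma hKpos (hD : 3 ≤ D) : 0 < (D:ℝ) * ((D:ℝ) - 2) := by
  have h := hDr hD
  nlinarith

lemma W_base_pos (hD : 3 ≤ D) (r : ℝ) : (1:ℝ) ≤ 1 + r ^ 2 / ((D : ℝ) * ((D : ℝ) - 2)) := by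
  have h := hKpos hD
  have : 0 ≤ r ^ 2 / ((D : ℝ) * ((D : ℝ) - 2)) := by positivity
  linarith

lemma W_nonneg (hD : 3 ≤ D) (r : ℝ) : 0 ≤ W D r :=
  Real.rpow_nonneg (le_trans zero_le_one (W_base_pos hD r)) _

lemma W_le_one (hD : 3 ≤ D) (r : ℝ) : W D r ≤ 1 := by
  apply Real.rpow_le_one_of_one_le_of_nonpos (W_base_pos hD r)
  have := hDr hD
  linarith

-- decay bound : W x ≤ K^e * x^(-(D-2)) for x > 0, where K = D(D-2), e = (D-2)/2
lemma W_decay (hD : 3 ≤ D) {x : ℝ} (hx : 0 < x) :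
    W D x ≤ ((D:ℝ) * ((D:ℝ) - 2)) ^ (((D:ℝ) - 2) / 2) * x ^ (-((D:ℝ) - 2)) := by
  set K : ℝ := (D:ℝ) * ((D:ℝ) - 2) with hK
  set e : ℝ := ((D:ℝ) - 2) / 2 with he
  have hKp : 0 < K := hKpos hD
  have hep : 0 < e := by have := hDr hD; rw [he]; linarith
  have h1 : W D x ≤ (x ^ 2 / K) ^ (-e) := by
    apply Real.rpow_le_rpow_of_nonpos (by positivity)
    · have : (0:ℝ) ≤ 1 := zero_le_one
      linarith [W_base_pos hD x]
    · linarith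
  refine h1.trans_eq ?_
  rw [Real.div_rpow (by positivity) hKp.le, Real.rpow_neg (by positivity),
    Real.rpow_neg hKp.le]
  have h2 : (x ^ 2 : ℝ) ^ e = x ^ ((D:ℝ) - 2) := by
    rw [← Real.rpow_natCast x 2, ← Real.rpow_mul hx.le]
    congr 1
    push_cast
    rw [he]; ring
  rw [h2, Real.rpow_neg hx.le, div_eq_mul_inv, inv_inv]
  ring


lemma rpow_inner_id {lk lj e : ℝ} (hk : 0 < lk) (hj : 0 < lj) :
    lk ^ (-e) * (lj / lk) ^ (-(2 * e)) = lj ^ (-e) * (lk / lj) ^ e := by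
  rw [Real.rpow_def_of_pos hk, Real.rpow_def_of_pos hj,
    Real.rpow_def_of_pos (div_pos hj hk), Real.rpow_def_of_pos (div_pos hk hj),
    ← Real.exp_add, ← Real.exp_add, Real.log_div hj.ne' hk.ne', Real.log_div hk.ne' hj.ne']
  congr 1
  ring

lemma rpow_tail_id {lk lj e : ℝ} (hk : 0 < lk) (hj : 0 < lj) :
    lk ^ (-e) = lj ^ (-e) * (lj / lk) ^ e := by
  rw [Real.rpow_def_of_pos hk, Real.rpow_def_of_pos hj,
    Real.rpow_def_of_pos (div_pos hj hk),
    ← Real.exp_add, Real.log_div hj.ne' hk.ne']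
  congr 1
  ring

lemma resc_W_nonneg (hD : 3 ≤ D) {lam : ℝ} (hl : 0 < lam) (r : ℝ) :
    0 ≤ resc D (W D) lam r :=
  mul_nonneg (Real.rpow_nonneg hl.le _) (W_nonneg hD _)

lemma resc_W_le_self (hD : 3 ≤ D) {lam : ℝ} (hl : 0 < lam) (r : ℝ) :
    resc D (W D) lam r ≤ lam ^ (-(((D:ℝ) - 2) / 2)) :=
  mul_le_of_le_one_right (Real.rpow_nonneg hl.le _) (W_le_one hD _)

lemma resc_W_le_tail (hD : 3 ≤ D) {lj lk r : ℝ} (hj : 0 < lj) (hk : 0 < lk) :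
    resc D (W D) lk r ≤ lj ^ (-(((D:ℝ) - 2) / 2)) * (lj / lk) ^ (((D:ℝ) - 2) / 2) := by
  refine (resc_W_le_self hD hk r).trans_eq ?_
  exact rpow_tail_id hk hj

lemma resc_W_le_inner (hD : 3 ≤ D) {a lj lk r : ℝ} (ha : 0 < a) (hj : 0 < lj) (hk : 0 < lk)
    (hr : a * lj ≤ r) :
    resc D (W D) lk r ≤
      (((D:ℝ) * ((D:ℝ) - 2)) ^ (((D:ℝ) - 2) / 2) * a ^ (-((D:ℝ) - 2)))
        * (lj ^ (-(((D:ℝ) - 2) / 2)) * (lk / lj) ^ (((D:ℝ) - 2) / 2)) := by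
  set e : ℝ := ((D:ℝ) - 2) / 2 with he
  set K : ℝ := (D:ℝ) * ((D:ℝ) - 2) with hK
  have hrpos : 0 < r := lt_of_lt_of_le (by positivity) hr
  have hKp : (0:ℝ) ≤ K := by
    have := hDr hD
    rw [hK]; nlinarith
  have hlk : (0:ℝ) ≤ lk ^ (-e) := Real.rpow_nonneg hk.le _
  have hs2e : -((D:ℝ) - 2) = -(2 * e) := by rw [he]; ring
  have step1 : resc D (W D) lk r ≤ lk ^ (-e) * (K ^ e * (r / lk) ^ (-(2 * e))) := by
    have := W_decay hD (div_pos hrpos hk)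
    rw [hs2e] at this
    exact mul_le_mul_of_nonneg_left this hlk
  have step2 : (r / lk) ^ (-(2 * e)) ≤ (a * lj / lk) ^ (-(2 * e)) := by
    apply Real.rpow_le_rpow_of_nonpos (by positivity) (by gcongr)
    have h1 := hDr hD
    rw [he]; linarith
  have step3 : (a * lj / lk) ^ (-(2 * e)) = a ^ (-(2 * e)) * (lj / lk) ^ (-(2 * e)) := by
    rw [mul_div_assoc, Real.mul_rpow ha.le (by positivity)]
  calc resc D (W D) lk r ≤ lk ^ (-e) * (K ^ e * (r / lk) ^ (-(2 * e))) := step1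
    _ ≤ lk ^ (-e) * (K ^ e * (a * lj / lk) ^ (-(2 * e))) := by
        apply mul_le_mul_of_nonneg_left _ hlk
        apply mul_le_mul_of_nonneg_left step2 (Real.rpow_nonneg hKp _)
    _ = (K ^ e * a ^ (-(2 * e))) * (lk ^ (-e) * (lj / lk) ^ (-(2 * e))) := by
        rw [step3]; ring
    _ = (K ^ e * a ^ (-((D:ℝ) - 2))) * (lj ^ (-e) * (lk / lj) ^ e) := by
        rw [rpow_inner_id hk hj, hs2e]

lemma collapse (hD : 3 ≤ D) {x : ℝ} (hx : 0 < x) :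
    (x ^ (-(((D:ℝ) - 2) / 2))) ^ ((4:ℝ) / ((D:ℝ) - 2)) * x ^ (-(((D:ℝ) - 2) / 2))
      * x ^ (-(((D:ℝ) - 2) / 2)) * x ^ ((D:ℝ) - 1) * x ^ (1:ℝ) = 1 := by
  have hne : (D:ℝ) - 2 ≠ 0 := by have := hDr hD; linarith
  have h1 : ((x ^ (-(((D:ℝ) - 2) / 2))) : ℝ) ^ ((4:ℝ) / ((D:ℝ) - 2))
      = x ^ ((-(((D:ℝ) - 2) / 2)) * ((4:ℝ) / ((D:ℝ) - 2))) := (Real.rpow_mul hx.le _ _).symm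
  rw [h1, ← Real.rpow_add hx, ← Real.rpow_add hx, ← Real.rpow_add hx, ← Real.rpow_add hx]
  have hE : -(((D:ℝ) - 2) / 2) * ((4:ℝ) / ((D:ℝ) - 2)) + -(((D:ℝ) - 2) / 2)
      + -(((D:ℝ) - 2) / 2) + ((D:ℝ) - 1) + 1 = 0 := by
    field_simp
    ring
  rw [hE, Real.rpow_zero]
lemma lam_chain {N : ℕ} {lam : ℕ → ℝ}
    (hmono : ∀ j, 1 ≤ j → j < N → lam j ≤ lam (j + 1)) :
    ∀ k m, 1 ≤ k → k ≤ m → m ≤ N → lam k ≤ lam m := by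
  intro k m hk
  induction m with
  | zero => intro hkm _; exact ((by omega : False)).elim
  | succ n ih =>
      intro hkm hmN
      rcases eq_or_lt_of_le hkm with he | hlt
      · rw [he]
      · exact (ih (by omega) (by omega)).trans (hmono n (by omega) (by omega))
end aux

/-- Smallness of the bubble interaction in the critical pairing: for a fixed radial test
function `𝒵 ∈ C_c^∞((0,∞))` there is `C = C(D,N,𝒵)` such that for ordered scales and any
phases, `|⟨f_i | 𝒵_{λ_j}⟩| ≤ C((λ_j/λ_{j+1})^{(D-2)/2} + (λ_{j-1}/λ_j)^{(D-2)/2})`,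
with the conventions `λ₀/λ₁ = λ_N/λ_{N+1} = 0`. -/
theorem stmt14 (D N : ℕ) (hD : 3 ≤ D) (hN : 1 ≤ N) (Z : ℝ → ℝ)
    (hZ : ContDiff ℝ (⊤ : ℕ∞) Z) (hZc : HasCompactSupport Z) (hZsupp : tsupport Z ⊆ Ioi 0) :
    ∃ C > (0 : ℝ), ∀ (lam : ℕ → ℝ) (θ : ℕ → ℝ),
      (∀ j, 1 ≤ j → j ≤ N → 0 < lam j) →
      (∀ j, 1 ≤ j → j < N → lam j ≤ lam (j + 1)) →
      ∀ j, 1 ≤ j → j ≤ N →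
      |∫ r in Ioi (0 : ℝ),
          ((starRingEnd ℂ)
              (fNL D (∑ k ∈ Finset.Icc 1 N, Complex.exp (θ k * Complex.I) *
                  (resc D (W D) (lam k) r : ℂ))
                - ∑ k ∈ Finset.Icc 1 N, Complex.exp (θ k * Complex.I) *
                    fNL D ((resc D (W D) (lam k) r : ℂ)))
            * ((resc D Z (lam j) r : ℝ) : ℂ)).re * r ^ ((D : ℝ) - 1)|
        ≤ C * ((if j < N then (lam j / lam (j + 1)) ^ (((D : ℝ) - 2) / 2) else 0)
            + (if 2 ≤ j then (lam (j - 1) / lam j) ^ (((D : ℝ) - 2) / 2) else 0)) := by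
  have hD2 : (1:ℝ) ≤ (D:ℝ) - 2 := hDr hD
  set e : ℝ := ((D:ℝ) - 2) / 2 with he
  set q : ℝ := (4:ℝ) / ((D:ℝ) - 2) with hq
  have he0 : 0 < e := by rw [he]; linarith
  have hq0 : 0 < q := by rw [hq]; positivity
  -- support bounds
  obtain ⟨a, b, ha, hab, hsupp⟩ : ∃ a b : ℝ, 0 < a ∧ a ≤ b ∧ tsupport Z ⊆ Icc a b := by
    rcases eq_empty_or_nonempty (tsupport Z) with hemp | hne
    · exact ⟨1, 1, one_pos, le_refl 1, by rw [hemp]; exact empty_subset _⟩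
    · have hcp : IsCompact (tsupport Z) := hZc
      have hInf := hcp.sInf_mem hne
      have hSup := hcp.sSup_mem hne
      refine ⟨sInf (tsupport Z), sSup (tsupport Z), hZsupp hInf, ?_, ?_⟩
      · exact Real.sInf_le_sSup _ hcp.isBounded.bddBelow hcp.isBounded.bddAbove
      · intro x hx
        exact ⟨csInf_le hcp.isBounded.bddBelow hx, le_csSup hcp.isBounded.bddAbove hx⟩
  have hb : 0 < b := lt_of_lt_of_le ha hab
  -- bound for Z
  obtain ⟨Cz, hCz⟩ : ∃ Cz : ℝ, ∀ x, |Z x| ≤ Cz := by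
    obtain ⟨Cz, hCz⟩ := hZc.exists_bound_of_continuous hZ.continuous
    exact ⟨Cz, fun x => by simpa [Real.norm_eq_abs] using hCz x⟩
  have hCz0 : 0 ≤ Cz := le_trans (abs_nonneg _) (hCz 0)
  -- constants
  set c : ℝ := max 1 (((D:ℝ) * ((D:ℝ) - 2)) ^ e * a ^ (-((D:ℝ) - 2))) with hc
  have hc1 : (1:ℝ) ≤ c := le_max_left _ _
  have hc0 : (0:ℝ) < c := lt_of_lt_of_le one_pos hc1
  set C2 : ℝ := (5 * (N:ℝ) ^ q * (N:ℝ) + (N:ℝ)) * c ^ q * c with hC2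
  have hN1 : (1:ℝ) ≤ (N:ℝ) := by exact_mod_cast hN
  have hC2pos : 0 < C2 := by
    rw [hC2]
    have h1 : (0:ℝ) < (N:ℝ) ^ q := Real.rpow_pos_of_pos (by linarith) q
    have h2 : (0:ℝ) < c ^ q := Real.rpow_pos_of_pos hc0 q
    have h3 : (0:ℝ) < 5 * (N:ℝ) ^ q * (N:ℝ) + (N:ℝ) := by nlinarith
    exact mul_pos (mul_pos h3 h2) hc0
  refine ⟨C2 * Cz * b ^ ((D:ℝ) - 1) * b + 1, by positivity, ?_⟩
  intro lam θ hpos hmono j hj1 hjN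
  have hlj : 0 < lam j := hpos j hj1 hjN
  set A : ℝ := lam j ^ (-e) with hA
  have hA0 : 0 < A := Real.rpow_pos_of_pos hlj _
  set rho : ℝ := (if j < N then (lam j / lam (j + 1)) ^ e else 0)
      + (if 2 ≤ j then (lam (j - 1) / lam j) ^ e else 0) with hrho
  have hchain := lam_chain hmono
  have hrho1 : 0 ≤ (if j < N then (lam j / lam (j + 1)) ^ e else 0) := by
    split
    · apply Real.rpow_nonneg
      exact div_nonneg hlj.le (hpos (j+1) (by omega) (by omega)).le
    · exact le_refl 0
  have hrho2 : 0 ≤ (if 2 ≤ j then (lam (j - 1) / lam j) ^ e else 0) := by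
    split
    · apply Real.rpow_nonneg
      exact div_nonneg (hpos (j-1) (by omega) (by omega)).le hlj.le
    · exact le_refl 0
  have hrho0 : 0 ≤ rho := by rw [hrho]; linarith
  -- epsilon
  set eps : ℕ → ℝ := fun k =>
    if k < j then (lam k / lam j) ^ e else if k = j then 1 else (lam j / lam k) ^ e with heps
  have hEps0 : ∀ k, 1 ≤ k → k ≤ N → 0 ≤ eps k := by
    intro k hk1 hkN
    simp only [heps]
    rcases lt_trichotomy k j with h | h | h
    · rw [if_pos h]
      exact Real.rpow_nonneg (div_nonneg (hpos k hk1 hkN).le hlj.le) e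
    · rw [if_neg (by omega), if_pos h]; norm_num
    · rw [if_neg (by omega), if_neg (by omega)]
      exact Real.rpow_nonneg (div_nonneg hlj.le (hpos k hk1 hkN).le) e
  have hEps1 : ∀ k, 1 ≤ k → k ≤ N → eps k ≤ 1 := by
    intro k hk1 hkN
    simp only [heps]
    rcases lt_trichotomy k j with h | h | h
    · rw [if_pos h]
      apply Real.rpow_le_one (div_nonneg (hpos k hk1 hkN).le hlj.le) _ he0.le
      rw [div_le_one hlj]
      exact hchain k j hk1 (by omega) hjN
    · rw [if_neg (by omega), if_pos h]
    · rw [if_neg (by omega), if_neg (by omega)]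
      apply Real.rpow_le_one (div_nonneg hlj.le (hpos k hk1 hkN).le) _ he0.le
      rw [div_le_one (hpos k hk1 hkN)]
      exact hchain j k hj1 (by omega) hkN
  have hEpsRho : ∀ k, 1 ≤ k → k ≤ N → k ≠ j → eps k ≤ rho := by
    intro k hk1 hkN hkj
    simp only [heps]
    rcases lt_trichotomy k j with h | h | h
    · rw [if_pos h]
      have h2j : 2 ≤ j := by omega
      have hlam : lam k ≤ lam (j - 1) := hchain k (j-1) hk1 (by omega) (by omega)
      have hstep : (lam k / lam j) ^ e ≤ (lam (j-1) / lam j) ^ e := by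
        apply Real.rpow_le_rpow (div_nonneg (hpos k hk1 hkN).le hlj.le) _ he0.le
        gcongr
      rw [hrho, if_pos h2j]
      linarith
    · exact absurd h hkj
    · rw [if_neg (by omega), if_neg (by omega)]
      have hjN' : j < N := by omega
      have hlam : lam (j+1) ≤ lam k := hchain (j+1) k (by omega) (by omega) hkN
      have hstep : (lam j / lam k) ^ e ≤ (lam j / lam (j+1)) ^ e := by
        apply Real.rpow_le_rpow (div_nonneg hlj.le (hpos k hk1 hkN).le) _ he0.le
        gcongr
        exact hpos (j+1) (by omega) (by omega)
      rw [hrho, if_pos hjN']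
      linarith
  have hjmem : j ∈ Finset.Icc 1 N := Finset.mem_Icc.mpr ⟨hj1, hjN⟩
  have halj : 0 < a * lam j := by positivity
  -- vanishing of the integrand outside Icc (a lj) (b lj)
  have hZzero : ∀ r : ℝ, r ∉ Icc (a * lam j) (b * lam j) → Z (r / lam j) = 0 := by
    intro r hr
    apply image_eq_zero_of_notMem_tsupport
    intro hmem
    apply hr
    obtain ⟨h1, h2⟩ := hsupp hmem
    constructor
    · have := mul_le_mul_of_nonneg_right h1 hlj.le
      rwa [div_mul_cancel₀ _ hlj.ne'] at this
    · have := mul_le_mul_of_nonneg_right h2 hlj.le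
      rwa [div_mul_cancel₀ _ hlj.ne'] at this
  have hIcc : ∀ r : ℝ, r ∉ Icc (a * lam j) (b * lam j) →
      ((starRingEnd ℂ)
          (fNL D (∑ k ∈ Finset.Icc 1 N, Complex.exp (θ k * Complex.I) *
              (resc D (W D) (lam k) r : ℂ))
            - ∑ k ∈ Finset.Icc 1 N, Complex.exp (θ k * Complex.I) *
                fNL D ((resc D (W D) (lam k) r : ℂ)))
        * ((resc D Z (lam j) r : ℝ) : ℂ)).re * r ^ ((D : ℝ) - 1) = 0 := by
    intro r hr
    have hz := hZzero r hr
    simp [resc, hz]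
  have hIoi : ∀ r : ℝ, r ∉ Ioi (0:ℝ) →
      ((starRingEnd ℂ)
          (fNL D (∑ k ∈ Finset.Icc 1 N, Complex.exp (θ k * Complex.I) *
              (resc D (W D) (lam k) r : ℂ))
            - ∑ k ∈ Finset.Icc 1 N, Complex.exp (θ k * Complex.I) *
                fNL D ((resc D (W D) (lam k) r : ℂ)))
        * ((resc D Z (lam j) r : ℝ) : ℂ)).re * r ^ ((D : ℝ) - 1) = 0 := by
    intro r hr
    apply hIcc
    intro hmem
    apply hr
    exact lt_of_lt_of_le halj hmem.1
  rw [setIntegral_eq_integral_of_forall_compl_eq_zero hIoi,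
    ← setIntegral_eq_integral_of_forall_compl_eq_zero hIcc]
  -- pointwise bound on Icc
  set Cb : ℝ := C2 * ((A ^ q * A) * rho) * (A * Cz) * ((b * lam j) ^ ((D:ℝ) - 1)) with hCb
  have hpt : ∀ r ∈ Icc (a * lam j) (b * lam j),
      ‖((starRingEnd ℂ)
          (fNL D (∑ k ∈ Finset.Icc 1 N, Complex.exp (θ k * Complex.I) *
              (resc D (W D) (lam k) r : ℂ))
            - ∑ k ∈ Finset.Icc 1 N, Complex.exp (θ k * Complex.I) *
                fNL D ((resc D (W D) (lam k) r : ℂ)))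
        * ((resc D Z (lam j) r : ℝ) : ℂ)).re * r ^ ((D : ℝ) - 1)‖ ≤ Cb := by
    intro r hr
    obtain ⟨hr1, hr2⟩ := hr
    have hrpos : 0 < r := lt_of_lt_of_le halj hr1
    -- norm of a single bubble
    have hUnorm : ∀ k, 1 ≤ k → k ≤ N →
        ‖Complex.exp (θ k * Complex.I) * ((resc D (W D) (lam k) r : ℝ) : ℂ)‖
          = resc D (W D) (lam k) r := by
      intro k hk1 hkN
      rw [norm_mul, Complex.norm_exp_ofReal_mul_I, one_mul, Complex.norm_real,
        Real.norm_eq_abs, _root_.abs_of_nonneg (resc_W_nonneg hD (hpos k hk1 hkN) r)]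
    have hUb : ∀ k, 1 ≤ k → k ≤ N →
        ‖Complex.exp (θ k * Complex.I) * ((resc D (W D) (lam k) r : ℝ) : ℂ)‖
          ≤ (c * A) * eps k := by
      intro k hk1 hkN
      have hlk : 0 < lam k := hpos k hk1 hkN
      rw [hUnorm k hk1 hkN]
      simp only [heps]
      rcases lt_trichotomy k j with h | h | h
      · rw [if_pos h]
        have hinner := resc_W_le_inner (a := a) (r := r) hD ha hlj hlk hr1
        rw [← he] at hinner
        refine hinner.trans ?_
        have hc2 : ((D:ℝ) * ((D:ℝ) - 2)) ^ e * a ^ (-((D:ℝ) - 2)) ≤ c := le_max_right _ _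
        have hnn : 0 ≤ lam j ^ (-e) * (lam k / lam j) ^ e :=
          mul_nonneg (Real.rpow_nonneg hlj.le _) (Real.rpow_nonneg (by positivity) _)
        calc ((D:ℝ) * ((D:ℝ) - 2)) ^ e * a ^ (-((D:ℝ) - 2))
              * (lam j ^ (-e) * (lam k / lam j) ^ e)
            ≤ c * (lam j ^ (-e) * (lam k / lam j) ^ e) :=
              mul_le_mul_of_nonneg_right hc2 hnn
          _ = (c * A) * (lam k / lam j) ^ e := by rw [hA]; ring
      · rw [if_neg (by omega), if_pos h, mul_one]
        have hself := resc_W_le_self (lam := lam k) hD hlk r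
        rw [← he, h] at hself
        rw [h]
        refine hself.trans ?_
        rw [hA]
        nlinarith [Real.rpow_pos_of_pos hlj (-e)]
      · rw [if_neg (by omega), if_neg (by omega)]
        have htail := resc_W_le_tail (lj := lam j) (lk := lam k) (r := r) hD hlj hlk
        rw [← he] at htail
        refine htail.trans ?_
        have hnn : 0 ≤ lam j ^ (-e) * (lam j / lam k) ^ e :=
          mul_nonneg (Real.rpow_nonneg hlj.le _) (Real.rpow_nonneg (by positivity) _)
        calc lam j ^ (-e) * (lam j / lam k) ^ e
            = 1 * (lam j ^ (-e) * (lam j / lam k) ^ e) := by ring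
          _ ≤ c * (lam j ^ (-e) * (lam j / lam k) ^ e) := mul_le_mul_of_nonneg_right hc1 hnn
          _ = (c * A) * (lam j / lam k) ^ e := by rw [hA]; ring
    have hUb1 : ∀ k, 1 ≤ k → k ≤ N →
        ‖Complex.exp (θ k * Complex.I) * ((resc D (W D) (lam k) r : ℝ) : ℂ)‖ ≤ c * A := by
      intro k hk1 hkN
      refine (hUb k hk1 hkN).trans ?_
      have := hEps1 k hk1 hkN
      nlinarith [hEps0 k hk1 hkN, mul_pos hc0 hA0]
    have hcard : ((Finset.Icc 1 N).card : ℝ) = (N : ℝ) := by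
      rw [Nat.card_Icc]
      norm_num
    -- norm of the full sum
    have hSn : ‖∑ k ∈ Finset.Icc 1 N, Complex.exp (θ k * Complex.I) *
        ((resc D (W D) (lam k) r : ℝ) : ℂ)‖ ≤ (N : ℝ) * (c * A) := by
      refine (norm_sum_le _ _).trans ?_
      calc ∑ k ∈ Finset.Icc 1 N,
            ‖Complex.exp (θ k * Complex.I) * ((resc D (W D) (lam k) r : ℝ) : ℂ)‖
          ≤ ∑ _k ∈ Finset.Icc 1 N, (c * A) := by
            refine Finset.sum_le_sum ?_
            intro k hk
            obtain ⟨hk1, hkN⟩ := Finset.mem_Icc.mp hk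
            exact hUb1 k hk1 hkN
        _ = ((Finset.Icc 1 N).card : ℝ) * (c * A) := by
            rw [Finset.sum_const, nsmul_eq_mul]
        _ = (N : ℝ) * (c * A) := by rw [hcard]
    -- sum of eps over the erased set
    have hsum_eps : ∑ k ∈ (Finset.Icc 1 N).erase j, eps k ≤ (N : ℝ) * rho := by
      calc ∑ k ∈ (Finset.Icc 1 N).erase j, eps k
          ≤ ∑ _k ∈ (Finset.Icc 1 N).erase j, rho := by
            refine Finset.sum_le_sum ?_
            intro k hk
            obtain ⟨hk1, hkN⟩ := Finset.mem_Icc.mp (Finset.mem_of_mem_erase hk)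
            exact hEpsRho k hk1 hkN (Finset.ne_of_mem_erase hk)
        _ = (((Finset.Icc 1 N).erase j).card : ℝ) * rho := by
            rw [Finset.sum_const, nsmul_eq_mul]
        _ ≤ (N : ℝ) * rho := by
            refine mul_le_mul_of_nonneg_right ?_ hrho0
            have h1 : ((Finset.Icc 1 N).erase j).card ≤ (Finset.Icc 1 N).card :=
              Finset.card_erase_le
            have h2 : ((Finset.Icc 1 N).card : ℝ) = (N : ℝ) := hcard
            calc (((Finset.Icc 1 N).erase j).card : ℝ)
                ≤ ((Finset.Icc 1 N).card : ℝ) := by exact_mod_cast h1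
              _ = (N : ℝ) := hcard
    -- difference of the sum and the j-th bubble
    have hSml : ‖(∑ k ∈ Finset.Icc 1 N, Complex.exp (θ k * Complex.I) *
          ((resc D (W D) (lam k) r : ℝ) : ℂ))
        - Complex.exp (θ j * Complex.I) * ((resc D (W D) (lam j) r : ℝ) : ℂ)‖
        ≤ (c * A) * ((N : ℝ) * rho) := by
      have hsplit : (∑ k ∈ Finset.Icc 1 N, Complex.exp (θ k * Complex.I) *
            ((resc D (W D) (lam k) r : ℝ) : ℂ))
          - Complex.exp (θ j * Complex.I) * ((resc D (W D) (lam j) r : ℝ) : ℂ)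
          = ∑ k ∈ (Finset.Icc 1 N).erase j, Complex.exp (θ k * Complex.I) *
              ((resc D (W D) (lam k) r : ℝ) : ℂ) := by
        rw [← Finset.add_sum_erase _ _ hjmem]
        ring
      rw [hsplit]
      refine (norm_sum_le _ _).trans ?_
      calc ∑ k ∈ (Finset.Icc 1 N).erase j,
            ‖Complex.exp (θ k * Complex.I) * ((resc D (W D) (lam k) r : ℝ) : ℂ)‖
          ≤ ∑ k ∈ (Finset.Icc 1 N).erase j, (c * A) * eps k := by
            refine Finset.sum_le_sum ?_
            intro k hk
            obtain ⟨hk1, hkN⟩ := Finset.mem_Icc.mp (Finset.mem_of_mem_erase hk)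
            exact hUb k hk1 hkN
        _ = (c * A) * ∑ k ∈ (Finset.Icc 1 N).erase j, eps k := by
            rw [Finset.mul_sum]
        _ ≤ (c * A) * ((N : ℝ) * rho) := by
            refine mul_le_mul_of_nonneg_left hsum_eps ?_
            positivity
    -- rewrite the nonlinearity difference
    have hphase : (∑ k ∈ Finset.Icc 1 N, Complex.exp (θ k * Complex.I) *
          fNL D ((resc D (W D) (lam k) r : ℂ)))
        = ∑ k ∈ Finset.Icc 1 N,
            fNL D (Complex.exp (θ k * Complex.I) * ((resc D (W D) (lam k) r : ℝ) : ℂ)) :=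
      Finset.sum_congr rfl (fun k _ => (fNL_phase D (θ k) _).symm)
    have hFr : fNL D (∑ k ∈ Finset.Icc 1 N, Complex.exp (θ k * Complex.I) *
          (resc D (W D) (lam k) r : ℂ))
        - ∑ k ∈ Finset.Icc 1 N, Complex.exp (θ k * Complex.I) *
            fNL D ((resc D (W D) (lam k) r : ℂ))
        = (fNL D (∑ k ∈ Finset.Icc 1 N, Complex.exp (θ k * Complex.I) *
              (resc D (W D) (lam k) r : ℂ))
            - fNL D (Complex.exp (θ j * Complex.I) * ((resc D (W D) (lam j) r : ℝ) : ℂ)))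
          - ∑ k ∈ (Finset.Icc 1 N).erase j,
              fNL D (Complex.exp (θ k * Complex.I) * ((resc D (W D) (lam k) r : ℝ) : ℂ)) := by
      rw [hphase, ← Finset.add_sum_erase _
        (fun k => fNL D (Complex.exp (θ k * Complex.I) *
          ((resc D (W D) (lam k) r : ℝ) : ℂ))) hjmem]
      ring
    -- bound the two pieces
    have hT1 : ‖fNL D (∑ k ∈ Finset.Icc 1 N, Complex.exp (θ k * Complex.I) *
          (resc D (W D) (lam k) r : ℂ))
        - fNL D (Complex.exp (θ j * Complex.I) * ((resc D (W D) (lam j) r : ℝ) : ℂ))‖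
        ≤ 5 * ((N : ℝ) * (c * A)) ^ q * ((c * A) * ((N : ℝ) * rho)) := by
      refine (fNL_lip D hD _ _).trans ?_
      rw [← hq]
      have hmax : max ‖∑ k ∈ Finset.Icc 1 N, Complex.exp (θ k * Complex.I) *
            ((resc D (W D) (lam k) r : ℝ) : ℂ)‖
          ‖Complex.exp (θ j * Complex.I) * ((resc D (W D) (lam j) r : ℝ) : ℂ)‖
          ≤ (N : ℝ) * (c * A) := by
        refine max_le hSn ((hUb1 j hj1 hjN).trans ?_)
        nlinarith [mul_pos hc0 hA0]
      have h1 : max ‖∑ k ∈ Finset.Icc 1 N, Complex.exp (θ k * Complex.I) *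
            ((resc D (W D) (lam k) r : ℝ) : ℂ)‖
          ‖Complex.exp (θ j * Complex.I) * ((resc D (W D) (lam j) r : ℝ) : ℂ)‖ ^ q
          ≤ ((N : ℝ) * (c * A)) ^ q :=
        Real.rpow_le_rpow (le_trans (norm_nonneg _) (le_max_left _ _)) hmax hq0.le
      refine mul_le_mul (mul_le_mul_of_nonneg_left h1 (by norm_num)) hSml
        (norm_nonneg _) ?_
      positivity
    have hT2 : ‖∑ k ∈ (Finset.Icc 1 N).erase j,
          fNL D (Complex.exp (θ k * Complex.I) * ((resc D (W D) (lam k) r : ℝ) : ℂ))‖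
        ≤ ((c * A) ^ q * (c * A)) * ((N : ℝ) * rho) := by
      refine (norm_sum_le _ _).trans ?_
      calc ∑ k ∈ (Finset.Icc 1 N).erase j,
            ‖fNL D (Complex.exp (θ k * Complex.I) * ((resc D (W D) (lam k) r : ℝ) : ℂ))‖
          ≤ ∑ k ∈ (Finset.Icc 1 N).erase j, ((c * A) ^ q * (c * A)) * eps k := by
            refine Finset.sum_le_sum ?_
            intro k hk
            obtain ⟨hk1, hkN⟩ := Finset.mem_Icc.mp (Finset.mem_of_mem_erase hk)
            rw [fNL_norm, ← hq]
            have hx1 : ‖Complex.exp (θ k * Complex.I) *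
                ((resc D (W D) (lam k) r : ℝ) : ℂ)‖ ^ q ≤ (c * A) ^ q :=
              Real.rpow_le_rpow (norm_nonneg _) (hUb1 k hk1 hkN) hq0.le
            calc ‖Complex.exp (θ k * Complex.I) * ((resc D (W D) (lam k) r : ℝ) : ℂ)‖ ^ q
                  * ‖Complex.exp (θ k * Complex.I) * ((resc D (W D) (lam k) r : ℝ) : ℂ)‖
                ≤ (c * A) ^ q * ((c * A) * eps k) := by
                  refine mul_le_mul hx1 (hUb k hk1 hkN) (norm_nonneg _) ?_
                  positivity
              _ = ((c * A) ^ q * (c * A)) * eps k := by ring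
        _ = ((c * A) ^ q * (c * A)) * ∑ k ∈ (Finset.Icc 1 N).erase j, eps k := by
            rw [Finset.mul_sum]
        _ ≤ ((c * A) ^ q * (c * A)) * ((N : ℝ) * rho) := by
            refine mul_le_mul_of_nonneg_left hsum_eps ?_
            positivity
    -- combine into the bound for F
    have hFb : ‖fNL D (∑ k ∈ Finset.Icc 1 N, Complex.exp (θ k * Complex.I) *
          (resc D (W D) (lam k) r : ℂ))
        - ∑ k ∈ Finset.Icc 1 N, Complex.exp (θ k * Complex.I) *
            fNL D ((resc D (W D) (lam k) r : ℂ))‖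
        ≤ C2 * ((A ^ q * A) * rho) := by
      rw [hFr]
      refine (norm_sub_le _ _).trans ?_
      refine (add_le_add hT1 hT2).trans (le_of_eq ?_)
      have hx1 : ((N : ℝ) * (c * A)) ^ q = (N : ℝ) ^ q * (c ^ q * A ^ q) := by
        rw [Real.mul_rpow (by positivity) (by positivity),
          Real.mul_rpow hc0.le hA0.le]
      have hx2 : (c * A) ^ q = c ^ q * A ^ q := Real.mul_rpow hc0.le hA0.le
      rw [hx1, hx2, hC2]
      ring
    -- assemble the pointwise bound
    have hZb : ‖((resc D Z (lam j) r : ℝ) : ℂ)‖ ≤ A * Cz := by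
      rw [Complex.norm_real, Real.norm_eq_abs]
      have hres : resc D Z (lam j) r = A * Z (r / lam j) := by
        rw [hA, he]; rfl
      rw [hres, abs_mul, _root_.abs_of_nonneg hA0.le]
      exact mul_le_mul_of_nonneg_left (hCz _) hA0.le
    have hnn2 : 0 ≤ C2 * ((A ^ q * A) * rho) :=
      mul_nonneg hC2pos.le
        (mul_nonneg (mul_nonneg (Real.rpow_nonneg hA0.le q) hA0.le) hrho0)
    have hnn : 0 ≤ (C2 * ((A ^ q * A) * rho)) * (A * Cz) :=
      mul_nonneg hnn2 (mul_nonneg hA0.le hCz0)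
    have hrp : r ^ ((D:ℝ) - 1) ≤ (b * lam j) ^ ((D:ℝ) - 1) :=
      Real.rpow_le_rpow hrpos.le hr2 (by linarith)
    rw [Real.norm_eq_abs, abs_mul,
      _root_.abs_of_nonneg (Real.rpow_nonneg hrpos.le ((D:ℝ) - 1))]
    refine le_trans (mul_le_mul (le_trans (Complex.abs_re_le_norm _) ?_) hrp
      (Real.rpow_nonneg hrpos.le _) hnn) (le_of_eq ?_)
    · rw [norm_mul, Complex.norm_conj]
      refine mul_le_mul ?_ hZb (norm_nonneg _) hnn2
      exact hFb
    · rw [hCb]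
  -- final accounting
  have hvol : (volume (Icc (a * lam j) (b * lam j))).toReal = b * lam j - a * lam j := by
    rw [Real.volume_Icc, ENNReal.toReal_ofReal (by nlinarith)]
  rw [← Real.norm_eq_abs]
  refine (norm_setIntegral_le_of_norm_le_const measure_Icc_lt_top
    hpt).trans ?_
  rw [measureReal_def, hvol]
  have hCb0 : 0 ≤ Cb := by
    rw [hCb]
    have hnn2 : 0 ≤ C2 * ((A ^ q * A) * rho) :=
      mul_nonneg hC2pos.le
        (mul_nonneg (mul_nonneg (Real.rpow_nonneg hA0.le q) hA0.le) hrho0)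
    exact mul_nonneg (mul_nonneg hnn2 (mul_nonneg hA0.le hCz0))
      (Real.rpow_nonneg (by positivity) _)
  have h1 : Cb * (b * lam j - a * lam j) ≤ Cb * (b * lam j) := by
    refine mul_le_mul_of_nonneg_left ?_ hCb0
    nlinarith
  refine h1.trans ?_
  have hbl : (b * lam j) ^ ((D:ℝ) - 1) = b ^ ((D:ℝ) - 1) * lam j ^ ((D:ℝ) - 1) :=
    Real.mul_rpow hb.le hlj.le
  have hcol := collapse hD hlj
  rw [← he, ← hq, ← hA] at hcol
  have hkey : Cb * (b * lam j) = (C2 * Cz * b ^ ((D:ℝ) - 1) * b) * rho := by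
    rw [hCb, hbl]
    have h2 : C2 * ((A ^ q * A) * rho) * (A * Cz)
          * (b ^ ((D:ℝ) - 1) * lam j ^ ((D:ℝ) - 1)) * (b * lam j)
        = (C2 * Cz * b ^ ((D:ℝ) - 1) * b) * rho
          * (A ^ q * A * A * lam j ^ ((D:ℝ) - 1) * lam j ^ (1:ℝ)) := by
      rw [Real.rpow_one]
      ring
    rw [h2, hcol, mul_one]
  rw [hkey]
  have hfac : 0 ≤ C2 * Cz * b ^ ((D:ℝ) - 1) * b :=
    mul_nonneg (mul_nonneg (mul_nonneg hC2pos.le hCz0)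
      (Real.rpow_nonneg hb.le _)) hb.le
  nlinarith [hrho0]
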